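/- arXiv:0805.2652 — 6 statements merged into one kernel-verified Lean document; each statement's English description precedes it below -/
import Mathlib

section
/- Let $f(u) = 1 + h(u-1) - u^h$ for $u \in [0,\infty)$, where $h \in (0,1)$ is fixed. Then there exists a constant $c \in (0,\infty)$ (depending on $h$) such that $f(u) \ge \frac{1}{c} \cdot \frac{(u-1)^2}{u+1}$ for all $u \in [0,\infty)$. -/
/-- For fixed `h ∈ (0,1)`, there is `c ∈ (0,∞)` such that
`1 + h(u-1) - u^h ≥ (1/c) (u-1)²/(u+1)` for all `u ≥ 0`. -/
theorem stmt0 (h : ℝ) (hh : h ∈ Set.Ioo (0:ℝ) 1) :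
    ∃ c : ℝ, 0 < c ∧ ∀ u : ℝ, 0 ≤ u →
      1 + h * (u - 1) - u ^ h ≥ (1 / c) * ((u - 1) ^ 2 / (u + 1)) := by
  obtain ⟨h0, h1⟩ := hh
  have hh1 : (0:ℝ) < h * (1 - h) := mul_pos h0 (by linarith)
  refine ⟨2 / (h * (1 - h)), div_pos two_pos hh1, fun u hu => ?_⟩
  set v := Real.sqrt u with hvdef
  have hv : 0 ≤ v := Real.sqrt_nonneg u
  have hv2 : v ^ 2 = u := Real.sq_sqrt hu
  -- AM-GM : v ^ h ≤ (1 - h) + h * v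
  have amgm : v ^ h ≤ (1 - h) + h * v := by
    have := Real.geom_mean_le_arith_mean2_weighted (by linarith : (0:ℝ) ≤ 1 - h)
      (le_of_lt h0) (zero_le_one) hv (by ring)
    simpa using this
  -- u ^ h = (v ^ h) ^ 2
  have hrw : u ^ h = (v ^ h) ^ 2 := by
    have h1' : u = v * v := by rw [← hv2]; ring
    rw [h1', Real.mul_rpow hv hv]; ring
  have hvhnn : 0 ≤ v ^ h := Real.rpow_nonneg hv h
  have key : u ^ h ≤ ((1 - h) + h * v) ^ 2 := by
    rw [hrw]
    exact pow_le_pow_left₀ hvhnn amgm 2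
  -- hence f(u) ≥ h(1-h)(v-1)^2
  have step1 : 1 + h * (u - 1) - u ^ h ≥ h * (1 - h) * (v - 1) ^ 2 := by
    nlinarith [key, hv2]
  -- (v+1)^2 ≤ 2(u+1)
  have step2 : (u - 1) ^ 2 / (u + 1) ≤ 2 * (v - 1) ^ 2 := by
    rw [div_le_iff₀ (by linarith : (0:ℝ) < u + 1)]
    nlinarith [hv2, sq_nonneg (v - 1), sq_nonneg (v + 1), sq_nonneg v]
  have hc : (1 : ℝ) / (2 / (h * (1 - h))) = h * (1 - h) / 2 := by
    field_simp
  rw [hc]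
  have hpos : 0 ≤ h * (1 - h) / 2 := by linarith
  calc h * (1 - h) / 2 * ((u - 1) ^ 2 / (u + 1))
      ≤ h * (1 - h) / 2 * (2 * (v - 1) ^ 2) := by
        exact mul_le_mul_of_nonneg_left step2 hpos
    _ = h * (1 - h) * (v - 1) ^ 2 := by ring
    _ ≤ 1 + h * (u - 1) - u ^ h := step1
end

section
/- Let $U$ be a nonnegative real random variable with $E[U] = 1$, $E[U^3] < \infty$, and $E[(U-1)^3] \le c_1 \mathrm{Var}(U)$ for some constant $c_1 \ge 0$. Then $\frac{1}{2+c_1}\mathrm{Var}(U) \le E\left[\frac{(U-1)^2}{U+1}\right]$. -/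
open MeasureTheory

/-- If `U ≥ 0`, `E[U] = 1`, `E[U³] < ∞` and `E[(U-1)³] ≤ c₁ Var(U)`, then
`Var(U)/(2+c₁) ≤ E[(U-1)²/(U+1)]`. -/
theorem stmt1 {Ω : Type*} [MeasurableSpace Ω] (μ : Measure Ω) [IsProbabilityMeasure μ]
    (U : Ω → ℝ) (hUmeas : Measurable U) (hUnn : ∀ ω, 0 ≤ U ω)
    (hUint : Integrable U μ) (hU3 : Integrable (fun ω => (U ω) ^ 3) μ)
    (hmean : ∫ ω, U ω ∂μ = 1)
    (c1 : ℝ) (hc1 : 0 ≤ c1)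
    (hskew : ∫ ω, (U ω - 1) ^ 3 ∂μ ≤ c1 * ∫ ω, (U ω - 1) ^ 2 ∂μ) :
    (1 / (2 + c1)) * ∫ ω, (U ω - 1) ^ 2 ∂μ ≤ ∫ ω, (U ω - 1) ^ 2 / (U ω + 1) ∂μ := by
  set t : ℝ := 2 + c1 with ht_def
  have ht : (0:ℝ) < t := by positivity
  clear_value t
  -- integrability of U^2
  have hU2 : Integrable (fun ω => (U ω) ^ 2) μ := by
    refine Integrable.mono (hUint.add hU3) ((hUmeas.pow_const 2).aestronglyMeasurable) ?_
    filter_upwards with ω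
    have h0 := hUnn ω
    simp only [Real.norm_eq_abs, Pi.add_apply]
    rw [abs_of_nonneg (by positivity), abs_of_nonneg (by positivity)]
    nlinarith [mul_nonneg h0 (sq_nonneg (U ω - 1))]
  have hint2 : Integrable (fun ω => (U ω - 1) ^ 2) μ := by
    have : (fun ω => (U ω - 1) ^ 2) = fun ω => (U ω)^2 - 2 * U ω + 1 := by
      funext ω; ring
    rw [this]
    exact (hU2.sub (hUint.const_mul 2)).add (integrable_const 1)
  have hint3 : Integrable (fun ω => (U ω - 1) ^ 3) μ := by
    have : (fun ω => (U ω - 1) ^ 3)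
        = fun ω => (U ω)^3 - 3 * (U ω)^2 + 3 * U ω - 1 := by
      funext ω; ring
    rw [this]
    exact ((hU3.sub (hU2.const_mul 3)).add (hUint.const_mul 3)).sub (integrable_const 1)
  have hintA : Integrable (fun ω => (U ω - 1) ^ 2 / (U ω + 1)) μ := by
    refine Integrable.mono hint2
      (((hUmeas.sub measurable_const).pow_const 2).div
        (hUmeas.add measurable_const)).aestronglyMeasurable ?_
    filter_upwards with ω
    have h0 := hUnn ω
    have hs : (1:ℝ) ≤ U ω + 1 := by linarith
    simp only [Real.norm_eq_abs]
    rw [abs_of_nonneg (by positivity), abs_of_nonneg (by positivity)]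
    calc (U ω - 1) ^ 2 / (U ω + 1) ≤ (U ω - 1) ^ 2 / 1 :=
          div_le_div_of_nonneg_left (sq_nonneg _) one_pos hs
      _ = (U ω - 1) ^ 2 := by rw [div_one]
  have hintB : Integrable (fun ω => (U ω - 1) ^ 2 * (U ω + 1)) μ := by
    have : (fun ω => (U ω - 1) ^ 2 * (U ω + 1))
        = fun ω => (U ω - 1)^3 + 2 * (U ω - 1)^2 := by
      funext ω; ring
    rw [this]
    exact hint3.add (hint2.const_mul 2)
  -- the value of ∫ (U-1)²(U+1)
  have hBval : ∫ ω, (U ω - 1) ^ 2 * (U ω + 1) ∂μ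
      = (∫ ω, (U ω - 1) ^ 3 ∂μ) + 2 * ∫ ω, (U ω - 1) ^ 2 ∂μ := by
    have h1 : (fun ω => (U ω - 1) ^ 2 * (U ω + 1))
        = fun ω => (U ω - 1)^3 + 2 * (U ω - 1)^2 := by
      funext ω; ring
    rw [h1, integral_add hint3 (hint2.const_mul 2), integral_const_mul]
  -- pointwise AM-GM inequality
  have hpt : ∀ ω, (U ω - 1) ^ 2
      ≤ t / 2 * ((U ω - 1) ^ 2 / (U ω + 1)) + 1 / (2 * t) * ((U ω - 1) ^ 2 * (U ω + 1)) := by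
    intro ω
    have h0 := hUnn ω
    have hs : (0:ℝ) < U ω + 1 := by linarith
    set s := U ω + 1
    set x := (U ω - 1) ^ 2 with hx_def
    have hx : 0 ≤ x := sq_nonneg _
    have key : t / 2 * (x / s) + 1 / (2 * t) * (x * s) - x
        = x * (t - s) ^ 2 / (2 * t * s) := by
      field_simp
      ring
    nlinarith [div_nonneg (mul_nonneg hx (sq_nonneg (t - s))) (by positivity : (0:ℝ) ≤ 2 * t * s)]
  -- integrate the pointwise inequality
  set V := ∫ ω, (U ω - 1) ^ 2 ∂μ with hV
  set A := ∫ ω, (U ω - 1) ^ 2 / (U ω + 1) ∂μ with hA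
  have hmono : V ≤ t / 2 * A + 1 / (2 * t) * ∫ ω, (U ω - 1) ^ 2 * (U ω + 1) ∂μ := by
    rw [hV, hA, ← integral_const_mul, ← integral_const_mul,
      ← integral_add ((hintA.const_mul _)) ((hintB.const_mul _))]
    exact integral_mono hint2 ((hintA.const_mul _).add (hintB.const_mul _)) hpt
  have hBle : ∫ ω, (U ω - 1) ^ 2 * (U ω + 1) ∂μ ≤ t * V := by
    rw [hBval]
    have : (2 + c1) * V = c1 * V + 2 * V := by ring
    rw [ht_def, this]
    exact add_le_add hskew le_rfl
  have hfinal : V ≤ t * A := by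
    have h2 : 1 / (2 * t) * ∫ ω, (U ω - 1) ^ 2 * (U ω + 1) ∂μ ≤ 1 / (2 * t) * (t * V) :=
      mul_le_mul_of_nonneg_left hBle (by positivity)
    have h3 : 1 / (2 * t) * (t * V) = V / 2 := by field_simp
    have h4 : t / 2 * A = t * A / 2 := by ring
    linarith
  calc 1 / t * V ≤ 1 / t * (t * A) := mul_le_mul_of_nonneg_left hfinal (by positivity)
    _ = A := by field_simp
end

section
/- Let $U$ be a nonnegative real random variable with $E[U] = 1$ and $E[U^3] < \infty$, and let $h \in (0,1)$. Then there is a constant $c_2 \in (0,\infty)$, depending only on $h$, such that $E\left[\frac{(U-1)^2}{U+1}\right] \le c_2\, E[1 - U^h]$. -/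
open MeasureTheory

/-- Weighted AM-GM deficiency: pointwise inequality underlying the statement. -/
lemma key_pointwise (h : ℝ) (h0 : 0 < h) (h1 : h < 1) (u : ℝ) (hu : 0 ≤ u) :
    (u - 1) ^ 2 / (u + 1) ≤ 2 / (h * (1 - h)) * (1 + h * (u - 1) - u ^ h) := by
  have hc : 0 < h * (1 - h) := mul_pos h0 (by linarith)
  set t := Real.sqrt u with hts
  have ht : 0 ≤ t := Real.sqrt_nonneg u
  have ht2 : t ^ 2 = u := Real.sq_sqrt hu
  -- Bernoulli / weighted AM-GM: t ^ h ≤ h * t + (1 - h)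
  have hber : t ^ h ≤ h * t + (1 - h) * 1 := by
    have := Real.geom_mean_le_arith_mean2_weighted h0.le (by linarith : (0:ℝ) ≤ 1 - h)
      ht zero_le_one (by ring)
    simpa using this
  -- u ^ h ≤ (h * t + (1 - h)) ^ 2
  have hpow : u ^ h ≤ (h * t + (1 - h)) ^ 2 := by
    have h1' : u ^ h = (t ^ h) ^ 2 := by
      rw [← ht2, ← Real.rpow_natCast t 2, ← Real.rpow_natCast (t ^ h) 2,
        ← Real.rpow_mul ht, ← Real.rpow_mul ht]
      norm_num [mul_comm]
    rw [h1']
    have h2' : 0 ≤ t ^ h := Real.rpow_nonneg ht h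
    nlinarith [hber]
  have hu1 : 0 < u + 1 := by linarith
  rw [div_le_iff₀ hu1, div_mul_eq_mul_div, div_mul_eq_mul_div, le_div_iff₀ hc]
  rw [← ht2] at hpow ⊢
  nlinarith [mul_le_mul_of_nonneg_left hpow (by positivity : (0:ℝ) ≤ 2 * (t ^ 2 + 1)),
    sq_nonneg (t - 1), sq_nonneg (t + 1), mul_nonneg hc.le (sq_nonneg ((t - 1) ^ 2))]

/-- For `h ∈ (0,1)` there is a constant `c₂ ∈ (0,∞)`, depending only on `h`, such that
for every nonnegative random variable `U` with mean one and finite third moment,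
`E[(U-1)²/(U+1)] ≤ c₂ E[1 - U^h]`. -/
theorem stmt2 (h : ℝ) (hh : h ∈ Set.Ioo (0:ℝ) 1) :
    ∃ c2 : ℝ, 0 < c2 ∧
      ∀ (Ω : Type) (_ : MeasurableSpace Ω) (μ : Measure Ω), IsProbabilityMeasure μ →
      ∀ U : Ω → ℝ, Measurable U → (∀ ω, 0 ≤ U ω) →
        Integrable U μ → Integrable (fun ω => (U ω) ^ 3) μ →
        (∫ ω, U ω ∂μ) = 1 →
        ∫ ω, (U ω - 1) ^ 2 / (U ω + 1) ∂μ ≤ c2 * ∫ ω, (1 - U ω ^ h) ∂μ := by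
  obtain ⟨h0, h1⟩ := hh
  have hc : 0 < h * (1 - h) := mul_pos h0 (by linarith)
  refine ⟨2 / (h * (1 - h)), by positivity, ?_⟩
  intro Ω m μ hμ U hUm hU0 hUint _ hmean
  have hdom : Integrable (fun ω => U ω + 1) μ := hUint.add (integrable_const 1)
  -- integrability of (U-1)^2/(U+1)
  have hint1 : Integrable (fun ω => (U ω - 1) ^ 2 / (U ω + 1)) μ := by
    refine hdom.mono ?_ ?_
    · exact (((hUm.sub measurable_const).pow_const 2).div
        (hUm.add measurable_const)).aestronglyMeasurable
    · refine Filter.Eventually.of_forall fun ω => ?_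
      have h0' := hU0 ω
      have hpos : (0:ℝ) < U ω + 1 := by linarith
      rw [Real.norm_eq_abs, Real.norm_eq_abs,
        abs_of_nonneg (div_nonneg (sq_nonneg _) hpos.le), abs_of_nonneg (by linarith)]
      rw [div_le_iff₀ hpos]
      nlinarith [sq_nonneg (U ω - 1)]
  -- integrability of U^h
  have hintpow : Integrable (fun ω => U ω ^ h) μ := by
    refine hdom.mono ?_ ?_
    · exact ((Real.continuous_rpow_const h0.le).measurable.comp hUm).aestronglyMeasurable
    · refine Filter.Eventually.of_forall fun ω => ?_
      have h0' := hU0 ω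
      rw [Real.norm_eq_abs, Real.norm_eq_abs,
        abs_of_nonneg (Real.rpow_nonneg h0' h), abs_of_nonneg (by linarith)]
      rcases le_or_gt (U ω) 1 with hle | hgt
      · have := Real.rpow_le_one h0' hle h0.le
        linarith
      · have : U ω ^ h ≤ U ω ^ (1:ℝ) :=
          Real.rpow_le_rpow_of_exponent_le hgt.le (by linarith)
        rw [Real.rpow_one] at this
        linarith
  have hint2 : Integrable (fun ω => 1 + h * (U ω - 1) - U ω ^ h) μ :=
    (((integrable_const 1).add ((hUint.sub (integrable_const 1)).const_mul h)).sub hintpow)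
  have hmono : ∫ ω, (U ω - 1) ^ 2 / (U ω + 1) ∂μ ≤
      ∫ ω, 2 / (h * (1 - h)) * (1 + h * (U ω - 1) - U ω ^ h) ∂μ := by
    refine integral_mono hint1 (hint2.const_mul _) fun ω => ?_
    exact key_pointwise h h0 h1 (U ω) (hU0 ω)
  have heq1 : ∫ ω, 2 / (h * (1 - h)) * (1 + h * (U ω - 1) - U ω ^ h) ∂μ
      = 2 / (h * (1 - h)) * ∫ ω, (1 + h * (U ω - 1) - U ω ^ h) ∂μ :=
    integral_const_mul _ _
  have heq2 : ∫ ω, (1 + h * (U ω - 1) - U ω ^ h) ∂μ = ∫ ω, (1 - U ω ^ h) ∂μ := by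
    have hre : ∀ ω, 1 + h * (U ω - 1) - U ω ^ h = (1 - U ω ^ h) + h * (U ω - 1) :=
      fun ω => by ring
    simp_rw [hre]
    have hA : Integrable (fun ω => 1 - U ω ^ h) μ := (integrable_const 1).sub hintpow
    have hB : Integrable (fun ω => h * (U ω - 1)) μ :=
      (hUint.sub (integrable_const 1)).const_mul h
    rw [integral_add hA hB, integral_const_mul,
      integral_sub hUint (integrable_const 1), hmean]
    simp
  calc ∫ ω, (U ω - 1) ^ 2 / (U ω + 1) ∂μ
      ≤ ∫ ω, 2 / (h * (1 - h)) * (1 + h * (U ω - 1) - U ω ^ h) ∂μ := hmono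
    _ = 2 / (h * (1 - h)) * ∫ ω, (1 - U ω ^ h) ∂μ := by rw [heq1, heq2]
end

section
/- In the linear stochastic evolution framework, the two-point function satisfies the Feynman–Kac formula: $E[N_{t,y} N_{t,\tilde y}] = |a|^{2t} \sum_{x,\tilde x} N_{0,x} N_{0,\tilde x}\, E^{x,\tilde x}_{S,\tilde S}[e_t : (S_t, \tilde S_t) = (y, \tilde y)]$, where $(S,\tilde S)$ is the independent product of two copies of the random walk with step distribution $a_z/|a|$, $e_t = \prod_{u=1}^t w(S_{u-1}, \tilde S_{u-1}, S_u, \tilde S_u)$, and $w(x,\tilde x, y, \tilde y) = E[A_{1,x,y} A_{1,\tilde x, \tilde y}]/(a_{y-x} a_{\tilde y - \tilde x})$ when $a_{y-x}a_{\tilde y-\tilde x} \ne 0$ and $0$ otherwise. -/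
/-!
`N_t` is a function of `A_1, …, A_t` alone, hence independent of `A_{t+1}`. Expanding
`N_{t+1,y} N_{t+1,ỹ}` therefore gives the forward equation
`E[N_{t+1,y} N_{t+1,ỹ}] = ∑_{x,x̃} E[N_{t,x} N_{t,x̃}] E[A_{x,y} A_{x̃,ỹ}]`, and
`E[A_{x,y} A_{x̃,ỹ}] = a_{y-x} a_{ỹ-x̃} w(x,x̃,y,ỹ)` also when `a_{y-x} a_{ỹ-x̃} = 0`, because a
nonnegative entry with zero mean vanishes almost surely. Splitting off the last step of the
weighted pair walk shows that the right-hand side solves the same forward equation, and both sides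
start from `N_{0,y} N_{0,ỹ}`. Finite range keeps all the sums finite, which justifies exchanging
them with each other and with expectations.
-/

open MeasureTheory ProbabilityTheory

/-- The linear stochastic evolution `N_t = N_0 A_1 ⋯ A_t`. -/
noncomputable def evolve {d : ℕ} {Ω : Type*} (A : ℕ → Ω → (Fin d → ℤ) → (Fin d → ℤ) → ℝ)
    (N0 : (Fin d → ℤ) → ℝ) : ℕ → Ω → (Fin d → ℤ) → ℝ
  | 0, _ => N0
  | (t + 1), ω => fun y => ∑' x, evolve A N0 t ω x * A t ω x y

open Finset Function
open scoped Pointwise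

section Deterministic

variable {V : Type*}

/-- `evolve` with the sum over sources at time `t` cut down to `S t`: being a finite sum, it is
measurable in the matrices, which the independence argument needs. -/
noncomputable def finEvolve (S : ℕ → Finset V) (N0 : V → ℝ) : ℕ → (ℕ → V → V → ℝ) → V → ℝ
  | 0, _ => N0
  | t + 1, M => fun y => ∑ x ∈ S t, finEvolve S N0 t M x * M t x y

variable {S : ℕ → Finset V} {N0 : V → ℝ} {M : ℕ → V → V → ℝ}

lemma finEvolve_eq_zero_of_notMem (hN0 : ∀ x ∉ S 0, N0 x = 0)
    (hM : ∀ t, ∀ x ∈ S t, ∀ y ∉ S (t + 1), M t x y = 0) :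
    ∀ t, ∀ y ∉ S t, finEvolve S N0 t M y = 0
  | 0, y, hy => hN0 y hy
  | t + 1, _, hy => sum_eq_zero fun x hx => by rw [hM t x hx _ hy, mul_zero]

lemma finEvolve_succ_mul_finEvolve_succ (t : ℕ) (y y' : V) :
    finEvolve S N0 (t + 1) M y * finEvolve S N0 (t + 1) M y' =
      ∑ q ∈ S t ×ˢ S t, (finEvolve S N0 t M q.1 * finEvolve S N0 t M q.2) *
        (M t q.1 y * M t q.2 y') := by
  simp only [finEvolve, sum_mul_sum, sum_product]
  exact sum_congr rfl fun _ _ => sum_congr rfl fun _ _ => by ring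

end Deterministic

lemma evolve_eq_finEvolve {d : ℕ} {Ω : Type*} {A : ℕ → Ω → (Fin d → ℤ) → (Fin d → ℤ) → ℝ}
    {N0 : (Fin d → ℤ) → ℝ} {S : ℕ → Finset (Fin d → ℤ)} {ω : Ω} (hN0 : ∀ x ∉ S 0, N0 x = 0)
    (hA : ∀ t, ∀ x ∈ S t, ∀ y ∉ S (t + 1), A t ω x y = 0) :
    ∀ t, evolve A N0 t ω = finEvolve S N0 t (A · ω)
  | 0 => rfl
  | t + 1 => by
    funext y
    have hzero := finEvolve_eq_zero_of_notMem hN0 hA t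
    show ∑' x, evolve A N0 t ω x * A t ω x y = _
    rw [evolve_eq_finEvolve hN0 hA t, tsum_eq_sum fun x hx => by rw [hzero x hx, zero_mul]]
    rfl

section Independence

variable {Ω β V : Type*} {mΩ : MeasurableSpace Ω} {μ : Measure Ω} {mβ : MeasurableSpace β}

lemma ProbabilityTheory.Indep.indepFun_of_measurable {γ : Type*} {mγ : MeasurableSpace γ}
    {m₁ m₂ : MeasurableSpace Ω} (h : Indep m₁ m₂ μ) {f : Ω → β} {g : Ω → γ}
    (hf : Measurable[m₁] f) (hg : Measurable[m₂] g) : IndepFun f g μ :=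
  (IndepFun_iff_Indep f g μ).2 (indep_of_indep_of_le h hf.comap_le hg.comap_le)

lemma ProbabilityTheory.iIndepFun.indep_iSup_comap_Iio {A : ℕ → Ω → β}
    (hA : ∀ t, Measurable (A t)) (hind : iIndepFun A μ) (t : ℕ) :
    Indep (⨆ s ∈ Set.Iio t, mβ.comap (A s)) (mβ.comap (A t)) μ := by
  have h := indep_iSup_of_disjoint (fun s => (hA s).comap_le) ((iIndepFun_iff_iIndep _ _ _).1 hind)
    (S := Set.Iio t) (T := {t}) (by simp)
  rwa [_root_.iSup_singleton] at h

lemma measurable_finEvolve_comap_Iio (S : ℕ → Finset V) (N0 : V → ℝ) (A : ℕ → Ω → V → V → ℝ) :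
    ∀ t y, Measurable[⨆ s ∈ Set.Iio t, MeasurableSpace.comap (A s) inferInstance]
      (fun ω => finEvolve S N0 t (A · ω) y)
  | 0, _ => measurable_const
  | t + 1, y => by
    have hle : ∀ s < t + 1, MeasurableSpace.comap (A s) inferInstance ≤
        ⨆ s ∈ Set.Iio (t + 1), MeasurableSpace.comap (A s) inferInstance := fun s hs =>
      le_biSup (fun s => MeasurableSpace.comap (A s) inferInstance) hs
    refine Finset.measurable_sum _ fun x _ => Measurable.mul ?_ ?_
    · exact (measurable_finEvolve_comap_Iio S N0 A t x).mono
        (iSup₂_le fun s hs => hle s (Nat.lt_succ_of_lt hs)) le_rfl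
    · exact ((by fun_prop : Measurable fun M : V → V → ℝ => M x y).comp
        (comap_measurable _)).mono (hle t (Nat.lt_succ_self t)) le_rfl

end Independence

section TwoPoint

variable {Ω V : Type*} [MeasurableSpace Ω] {μ : Measure Ω} {A : ℕ → Ω → V → V → ℝ}

lemma indepFun_finEvolve_mul_entry_mul (hA : ∀ t, Measurable (A t)) (hind : iIndepFun A μ)
    (S : ℕ → Finset V) (N0 : V → ℝ) (t : ℕ) (u v x y x' y' : V) :
    IndepFun (fun ω => finEvolve S N0 t (A · ω) u * finEvolve S N0 t (A · ω) v)
      (fun ω => A t ω x y * A t ω x' y') μ :=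
  (hind.indep_iSup_comap_Iio hA t).indepFun_of_measurable
    ((measurable_finEvolve_comap_Iio S N0 A t u).mul (measurable_finEvolve_comap_Iio S N0 A t v))
    ((by fun_prop : Measurable fun M : V → V → ℝ => M x y * M x' y').comp (comap_measurable _))

variable {S : ℕ → Finset V} {N0 : V → ℝ} [IsFiniteMeasure μ]

lemma integrable_finEvolve_mul (hA : ∀ t, Measurable (A t))
    (hind : iIndepFun A μ) (hAA : ∀ t x y x' y', Integrable (fun ω => A t ω x y * A t ω x' y') μ) :
    ∀ t u v, Integrable (fun ω => finEvolve S N0 t (A · ω) u * finEvolve S N0 t (A · ω) v) μ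
  | 0, u, v => integrable_const (N0 u * N0 v)
  | t + 1, _, _ => by
    simp_rw [finEvolve_succ_mul_finEvolve_succ]
    exact integrable_finsetSum _ fun q _ =>
      (indepFun_finEvolve_mul_entry_mul hA hind S N0 t _ _ _ _ _ _).integrable_mul
        (integrable_finEvolve_mul hA hind hAA t _ _) (hAA t _ _ _ _)

lemma integral_finEvolve_mul_succ (hA : ∀ t, Measurable (A t)) (hind : iIndepFun A μ)
    (hAA : ∀ t x y x' y', Integrable (fun ω => A t ω x y * A t ω x' y') μ) (t : ℕ) (y y' : V) :
    ∫ ω, finEvolve S N0 (t + 1) (A · ω) y * finEvolve S N0 (t + 1) (A · ω) y' ∂μ =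
      ∑ q ∈ S t ×ˢ S t, (∫ ω, finEvolve S N0 t (A · ω) q.1 * finEvolve S N0 t (A · ω) q.2 ∂μ) *
        ∫ ω, A t ω q.1 y * A t ω q.2 y' ∂μ := by
  have hindep := indepFun_finEvolve_mul_entry_mul hA hind S N0 t
  have hint : ∀ q : V × V, Integrable (fun ω => finEvolve S N0 t (A · ω) q.1 *
      finEvolve S N0 t (A · ω) q.2 * (A t ω q.1 y * A t ω q.2 y')) μ :=
    fun q => (hindep _ _ _ _ _ _).integrable_mul (integrable_finEvolve_mul hA hind hAA t _ _)
      (hAA t _ _ _ _)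
  simp_rw [finEvolve_succ_mul_finEvolve_succ]
  rw [integral_finsetSum _ fun q _ => hint q]
  exact sum_congr rfl fun q _ => (hindep _ _ _ _ _ _).integral_fun_mul_eq_mul_integral
    (integrable_finEvolve_mul hA hind hAA t _ _).aestronglyMeasurable
    (hAA t _ _ _ _).aestronglyMeasurable

end TwoPoint

lemma integral_evolve_mul_succ {d : ℕ} {Ω : Type*} [MeasurableSpace Ω] {μ : Measure Ω}
    [IsFiniteMeasure μ] {A : ℕ → Ω → (Fin d → ℤ) → (Fin d → ℤ) → ℝ} {N0 : (Fin d → ℤ) → ℝ}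
    {S : ℕ → Finset (Fin d → ℤ)} (hA : ∀ t, Measurable (A t)) (hind : iIndepFun A μ)
    (hAA : ∀ t x y x' y', Integrable (fun ω => A t ω x y * A t ω x' y') μ)
    (hN0 : ∀ x ∉ S 0, N0 x = 0)
    (hband : ∀ᵐ ω ∂μ, ∀ t, ∀ x ∈ S t, ∀ y ∉ S (t + 1), A t ω x y = 0) (t : ℕ) (y y' : Fin d → ℤ) :
    ∫ ω, evolve A N0 (t + 1) ω y * evolve A N0 (t + 1) ω y' ∂μ =
      ∑' q : (Fin d → ℤ) × (Fin d → ℤ), (∫ ω, evolve A N0 t ω q.1 * evolve A N0 t ω q.2 ∂μ) *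
        ∫ ω, A t ω q.1 y * A t ω q.2 y' ∂μ := by
  have hfin : ∀ s u v, ∫ ω, evolve A N0 s ω u * evolve A N0 s ω v ∂μ =
      ∫ ω, finEvolve S N0 s (A · ω) u * finEvolve S N0 s (A · ω) v ∂μ := fun s u v =>
    integral_congr_ae (hband.mono fun ω h => by simp only [evolve_eq_finEvolve hN0 h])
  have hzero : ∀ q ∉ S t ×ˢ S t,
      ∫ ω, finEvolve S N0 t (A · ω) q.1 * finEvolve S N0 t (A · ω) q.2 ∂μ = 0 := fun q hq =>
    integral_eq_zero_of_ae <| hband.mono fun ω h => by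
      rcases not_and_or.1 (mem_product.not.1 hq) with h1 | h2
      · simp [finEvolve_eq_zero_of_notMem hN0 h t _ h1]
      · simp [finEvolve_eq_zero_of_notMem hN0 h t _ h2]
  simp_rw [hfin]
  rw [integral_finEvolve_mul_succ hA hind hAA, tsum_eq_sum fun q hq => by rw [hzero q hq, zero_mul]]

section Moments

variable {Ω : Type*} [MeasurableSpace Ω] {μ : Measure Ω}

lemma integral_mul_eq_mul_integral_mul_ratio {X Y : Ω → ℝ} (hX : 0 ≤ X) (hY : 0 ≤ Y)
    (hXi : Integrable X μ) (hYi : Integrable Y μ) :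
    ∫ ω, X ω * Y ω ∂μ = (∫ ω, X ω ∂μ) * (∫ ω, Y ω ∂μ) *
      if (∫ ω, X ω ∂μ) * (∫ ω, Y ω ∂μ) ≠ 0
      then (∫ ω, X ω * Y ω ∂μ) / ((∫ ω, X ω ∂μ) * (∫ ω, Y ω ∂μ)) else 0 := by
  split_ifs with h
  · exact (mul_div_cancel₀ _ h).symm
  · rw [mul_zero]
    refine integral_eq_zero_of_ae ?_
    rcases mul_eq_zero.1 (not_not.1 h) with hX0 | hY0
    · filter_upwards [(integral_eq_zero_iff_of_nonneg hX hXi).1 hX0] with ω hω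
      simp [hω]
    · filter_upwards [(integral_eq_zero_iff_of_nonneg hY hYi).1 hY0] with ω hω
      simp [hω]

variable {G : Type*}

lemma integral_apply_eq_integral_apply_zero_sub [AddGroup G] {A₀ : Ω → G → G → ℝ}
    (hA₀ : Measurable A₀)
    (hshift : ∀ z, μ.map (fun ω x y => A₀ ω (x + z) (y + z)) = μ.map A₀) (x y : G) :
    ∫ ω, A₀ ω x y ∂μ = ∫ ω, A₀ ω 0 (y - x) ∂μ := by
  have h : IdentDistrib (fun ω u v => A₀ ω (u + x) (v + x)) A₀ μ μ :=
    ⟨(measurable_pi_lambda _ fun u => measurable_pi_lambda _ fun v =>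
      (measurable_pi_apply (v + x)).comp ((measurable_pi_apply (u + x)).comp hA₀)).aemeasurable,
      hA₀.aemeasurable, hshift x⟩
  simpa using (h.comp (by fun_prop : Measurable fun M : G → G → ℝ => M 0 (y - x))).integral_eq

lemma integrable_entry_mul_entry {A : ℕ → Ω → G → G → ℝ} (hA : ∀ t, Measurable (A t))
    (hident : ∀ t, μ.map (A t) = μ.map (A 0))
    (hsq : ∀ x y, Integrable (fun ω => (A 0 ω x y) ^ 2) μ) (t : ℕ) (x y x' y' : G) :
    Integrable (fun ω => A t ω x y * A t ω x' y') μ := by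
  have hL2 : ∀ x y, MemLp (fun ω => A 0 ω x y) 2 μ := fun x y =>
    (memLp_two_iff_integrable_sq (by fun_prop)).2 (hsq x y)
  have h : IdentDistrib (A t) (A 0) μ μ := ⟨(hA t).aemeasurable, (hA 0).aemeasurable, hident t⟩
  exact (h.comp (by fun_prop : Measurable fun M : G → G → ℝ => M x y * M x' y')).integrable_iff.2
    ((hL2 x y).integrable_mul (hL2 x' y'))

lemma integral_entry_mul_entry [IsFiniteMeasure μ] [AddGroup G] {A : ℕ → Ω → G → G → ℝ}
    (hA : ∀ t, Measurable (A t)) (hident : ∀ t, μ.map (A t) = μ.map (A 0))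
    (hnonneg : ∀ ω x y, 0 ≤ A 0 ω x y)
    (hshift : ∀ z, μ.map (fun ω x y => A 0 ω (x + z) (y + z)) = μ.map (A 0))
    (hsq : ∀ x y, Integrable (fun ω => (A 0 ω x y) ^ 2) μ)
    {a : G → ℝ} (ha : ∀ y, a y = ∫ ω, A 0 ω 0 y ∂μ) {w : G → G → G → G → ℝ}
    (hw : ∀ x x' y y', w x x' y y' =
      if a (y - x) * a (y' - x') ≠ 0
      then (∫ ω, A 0 ω x y * A 0 ω x' y' ∂μ) / (a (y - x) * a (y' - x'))
      else 0) (t : ℕ) (x x' y y' : G) :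
    ∫ ω, A t ω x y * A t ω x' y' ∂μ = a (y - x) * a (y' - x') * w x x' y y' := by
  have hmean : ∀ x y, ∫ ω, A 0 ω x y ∂μ = a (y - x) := fun x y =>
    (integral_apply_eq_integral_apply_zero_sub (hA 0) hshift x y).trans (ha _).symm
  have hint : ∀ x y, Integrable (fun ω => A 0 ω x y) μ := fun x y =>
    ((memLp_two_iff_integrable_sq (by fun_prop)).2 (hsq x y)).integrable one_le_two
  have h : IdentDistrib (A t) (A 0) μ μ := ⟨(hA t).aemeasurable, (hA 0).aemeasurable, hident t⟩
  have hpair := (h.comp (by fun_prop : Measurable fun M : G → G → ℝ => M x y * M x' y')).integral_eq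
  simp only [Function.comp_apply] at hpair
  rw [hpair, integral_mul_eq_mul_integral_mul_ratio (hnonneg · x y)
    (hnonneg · x' y') (hint x y) (hint x' y'), hmean, hmean, hw]

end Moments

noncomputable def latticeCube (d r : ℕ) : Finset (Fin d → ℤ) :=
  Fintype.piFinset fun _ => Icc (-(r : ℤ)) r

lemma lt_sum_natAbs_of_notMem_latticeCube {d r : ℕ} {z : Fin d → ℤ} (hz : z ∉ latticeCube d r) :
    r < ∑ i, (z i).natAbs := by
  obtain ⟨i, hi⟩ : ∃ i, z i ∉ Icc (-(r : ℤ)) r := by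
    simpa [latticeCube, Fintype.mem_piFinset] using hz
  have hlt : r < (z i).natAbs := by
    rw [mem_Icc] at hi
    omega
  exact hlt.trans_le
    (single_le_sum (f := fun j => (z j).natAbs) (fun j _ => Nat.zero_le _) (mem_univ i))

lemma ae_eq_zero_of_sub_notMem_latticeCube {d r : ℕ} {Ω : Type*} [MeasurableSpace Ω] {μ : Measure Ω}
    {A : ℕ → Ω → (Fin d → ℤ) → (Fin d → ℤ) → ℝ}
    (hrange : ∀ t, ∀ x y : Fin d → ℤ, r < (∑ i, (x i - y i).natAbs) → ∀ᵐ ω ∂μ, A t ω x y = 0) :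
    ∀ᵐ ω ∂μ, ∀ t x y, y - x ∉ latticeCube d r → A t ω x y = 0 := by
  simp only [ae_all_iff]
  intro t x y h
  refine hrange t x y ?_
  simpa [← Int.natAbs_neg (x _ - y _)] using lt_sum_natAbs_of_notMem_latticeCube h

lemma sub_notMem_of_mem_add_nsmul {G : Type*} [AddCommGroup G] [DecidableEq G] {S₀ B : Finset G}
    {t : ℕ} {x y : G} (hx : x ∈ S₀ + t • B) (hy : y ∉ S₀ + (t + 1) • B) : y - x ∉ B := fun hB =>
  hy (by simpa [succ_nsmul, ← add_assoc] using add_mem_add hx hB)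

lemma finite_support_mul_mul_sub {G : Type*} [AddGroup G] {a : G → ℝ} (ha : (support a).Finite)
    (f : G × G → ℝ) (p : G × G) :
    (support fun q : G × G => a (p.1 - q.1) * a (p.2 - q.2) * f q).Finite := by
  have hinj : Injective fun q : G × G => (p.1 - q.1, p.2 - q.2) := fun q q' h => by
    simp only [Prod.mk.injEq, sub_right_inj] at h
    exact Prod.ext h.1 h.2
  refine ((ha.prod ha).preimage hinj.injOn).subset fun q hq => ?_
  have haa := left_ne_zero_of_mul hq
  exact ⟨left_ne_zero_of_mul haa, right_ne_zero_of_mul haa⟩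

lemma tsum_mul_tsum_mul_comm {α β : Type*} {ν : α → ℝ} (hν : (support ν).Finite) (Q : α → β → ℝ)
    {P : β → ℝ} (hP : (support P).Finite) :
    ∑' x, ν x * ∑' q, Q x q * P q = ∑' q, (∑' x, ν x * Q x q) * P q := by
  have hsumP : ∀ g : β → ℝ, ∑' q, g q * P q = ∑ q ∈ hP.toFinset, g q * P q := fun g =>
    tsum_eq_sum fun q hq => by simp_all
  have hsumν : ∀ g : α → ℝ, ∑' x, ν x * g x = ∑ x ∈ hν.toFinset, ν x * g x := fun g =>
    tsum_eq_sum fun x hx => by simp_all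
  simp_rw [hsumP, hsumν, mul_sum, sum_mul]
  rw [sum_comm]
  simp_rw [mul_assoc]

lemma pow_mul_tsum_mul_succ_eq_tsum_mul {α β : Type*} {c : ℝ} (hc : c ≠ 0) {ν : α → ℝ}
    (hν : (support ν).Finite) (Q : ℕ → α → β → ℝ) {K : β → β → ℝ}
    (hK : ∀ p, (support (K · p)).Finite)
    (hQ : ∀ t x p, Q (t + 1) x p = ∑' q, Q t x q * (K q p / c ^ 2)) (t : ℕ) (p : β) :
    c ^ (2 * (t + 1)) * ∑' x, ν x * Q (t + 1) x p =
      ∑' q, (c ^ (2 * t) * ∑' x, ν x * Q t x q) * K q p := by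
  have hK' : (support fun q => K q p / c ^ 2) = support (K · p) := by
    ext q; simp [hc]
  simp_rw [hQ, tsum_mul_tsum_mul_comm hν _ (hK' ▸ hK p)]
  rw [← tsum_mul_left]
  refine tsum_congr fun q => ?_
  field_simp
  ring

theorem stmt8_general (d : ℕ)
    {Ω : Type*} [MeasurableSpace Ω] (μ : Measure Ω) [IsProbabilityMeasure μ]
    (A : ℕ → Ω → (Fin d → ℤ) → (Fin d → ℤ) → ℝ)
    (hAmeas : ∀ t, Measurable (A t))
    (hindep : iIndepFun A μ)
    (hident : ∀ t, μ.map (A t) = μ.map (A 0))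
    (hnonneg : ∀ t ω x y, 0 ≤ A t ω x y)
    (rA : ℕ)
    (hrange : ∀ t, ∀ x y : Fin d → ℤ, rA < (∑ i, (x i - y i).natAbs) →
      ∀ᵐ ω ∂μ, A t ω x y = 0)
    (hshift : ∀ z : Fin d → ℤ,
      μ.map (fun ω => fun x y => A 0 ω (x + z) (y + z)) = μ.map (A 0))
    (hsq : ∀ x y : Fin d → ℤ, Integrable (fun ω => (A 0 ω x y) ^ 2) μ)
    (a : (Fin d → ℤ) → ℝ) (ha : ∀ y, a y = ∫ ω, A 0 ω 0 y ∂μ)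
    (hapos : 0 < ∑' y, a y)
    (N0 : (Fin d → ℤ) → ℝ)
    (hN0fin : (Function.support N0).Finite)
    (w : (Fin d → ℤ) → (Fin d → ℤ) → (Fin d → ℤ) → (Fin d → ℤ) → ℝ)
    (hw : ∀ x x' y y', w x x' y y' =
      if a (y - x) * a (y' - x') ≠ 0
      then (∫ ω, A 0 ω x y * A 0 ω x' y' ∂μ) / (a (y - x) * a (y' - x'))
      else 0)
    (Q : ℕ → ((Fin d → ℤ) × (Fin d → ℤ)) → ((Fin d → ℤ) × (Fin d → ℤ)) → ℝ)
    (hQ0 : ∀ pq rs, Q 0 pq rs = if rs = pq then 1 else 0)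
    (hQstep : ∀ t pq rs, Q (t + 1) pq rs =
      ∑' uv : (Fin d → ℤ) × (Fin d → ℤ), Q t pq uv *
        ((a (rs.1 - uv.1) / (∑' y, a y)) * (a (rs.2 - uv.2) / (∑' y, a y)) *
          w uv.1 uv.2 rs.1 rs.2)) :
    ∀ (t : ℕ) (y y' : Fin d → ℤ),
      ∫ ω, evolve A N0 t ω y * evolve A N0 t ω y' ∂μ =
        (∑' y'', a y'') ^ (2 * t) *
          ∑' xx : (Fin d → ℤ) × (Fin d → ℤ), N0 xx.1 * N0 xx.2 * Q t xx (y, y') := by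
  have hband := ae_eq_zero_of_sub_notMem_latticeCube hrange
  have ha_fin : (support a).Finite := (latticeCube d rA).finite_toSet.subset fun z hz => by
    by_contra hz'
    exact hz ((ha z).trans (integral_eq_zero_of_ae (hband.mono fun ω h => h 0 0 z (by simpa))))
  have hN0N0 : (support fun x : (Fin d → ℤ) × (Fin d → ℤ) => N0 x.1 * N0 x.2).Finite :=
    (hN0fin.prod hN0fin).subset fun x hx => ⟨left_ne_zero_of_mul hx, right_ne_zero_of_mul hx⟩
  have hrhs := pow_mul_tsum_mul_succ_eq_tsum_mul hapos.ne' hN0N0 Q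
    (K := fun q p => a (p.1 - q.1) * a (p.2 - q.2) * w q.1 q.2 p.1 p.2)
    (fun p => finite_support_mul_mul_sub ha_fin (fun q => w q.1 q.2 p.1 p.2) p)
    fun t x p => (hQstep t x p).trans (tsum_congr fun q => by ring)
  have hlhs := integral_evolve_mul_succ (N0 := N0)
    (S := fun t => hN0fin.toFinset + t • latticeCube d rA) hAmeas hindep
    (integrable_entry_mul_entry hAmeas hident hsq) (by simp)
    (hband.mono fun ω h t x hx y hy => h t x y (sub_notMem_of_mem_add_nsmul hx hy))
  suffices h : ∀ t p, ∫ ω, evolve A N0 t ω p.1 * evolve A N0 t ω p.2 ∂μ =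
      (∑' y'', a y'') ^ (2 * t) * ∑' xx, N0 xx.1 * N0 xx.2 * Q t xx p from
    fun t y y' => h t (y, y')
  intro t
  induction t with
  | zero => simp [evolve, hQ0]
  | succ t ih =>
    intro p
    rw [hlhs, hrhs]
    refine tsum_congr fun q => ?_
    rw [ih, integral_entry_mul_entry hAmeas hident (hnonneg 0) hshift hsq ha hw]

/-- Feynman–Kac formula for the two-point function:
`E[N_{t,y} N_{t,ỹ}] = |a|^{2t} ∑_{x,x̃} N_{0,x} N_{0,x̃} E^{x,x̃}[e_t : (S_t,S̃_t)=(y,ỹ)]`,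
where the pair-walk expectation is encoded by the `t`-step weighted transition kernel `Q`
of the pair of independent `ā`-walks carrying the multiplicative weight `w`. -/
theorem stmt8 (d : ℕ)
    {Ω : Type*} [MeasurableSpace Ω] (μ : Measure Ω) [IsProbabilityMeasure μ]
    (A : ℕ → Ω → (Fin d → ℤ) → (Fin d → ℤ) → ℝ)
    (hAmeas : ∀ t, Measurable (A t))
    (hindep : iIndepFun A μ)
    (hident : ∀ t, μ.map (A t) = μ.map (A 0))
    (hcols : ∀ t, iIndepFun
      (fun (y : Fin d → ℤ) ω => fun x => A t ω x y) μ)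
    (hnonneg : ∀ t ω x y, 0 ≤ A t ω x y)
    (rA : ℕ)
    (hrange : ∀ t, ∀ x y : Fin d → ℤ, rA < (∑ i, (x i - y i).natAbs) →
      ∀ᵐ ω ∂μ, A t ω x y = 0)
    (hshift : ∀ z : Fin d → ℤ,
      μ.map (fun ω => fun x y => A 0 ω (x + z) (y + z)) = μ.map (A 0))
    (hsq : ∀ x y : Fin d → ℤ, Integrable (fun ω => (A 0 ω x y) ^ 2) μ)
    (a : (Fin d → ℤ) → ℝ) (ha : ∀ y, a y = ∫ ω, A 0 ω 0 y ∂μ)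
    (hapos : 0 < ∑' y, a y)
    (N0 : (Fin d → ℤ) → ℝ) (hN0nn : ∀ x, 0 ≤ N0 x)
    (hN0fin : (Function.support N0).Finite) (hN0ne : N0 ≠ 0)
    (w : (Fin d → ℤ) → (Fin d → ℤ) → (Fin d → ℤ) → (Fin d → ℤ) → ℝ)
    (hw : ∀ x x' y y', w x x' y y' =
      if a (y - x) * a (y' - x') ≠ 0
      then (∫ ω, A 0 ω x y * A 0 ω x' y' ∂μ) / (a (y - x) * a (y' - x'))
      else 0)
    (Q : ℕ → ((Fin d → ℤ) × (Fin d → ℤ)) → ((Fin d → ℤ) × (Fin d → ℤ)) → ℝ)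
    (hQ0 : ∀ pq rs, Q 0 pq rs = if rs = pq then 1 else 0)
    (hQstep : ∀ t pq rs, Q (t + 1) pq rs =
      ∑' uv : (Fin d → ℤ) × (Fin d → ℤ), Q t pq uv *
        ((a (rs.1 - uv.1) / (∑' y, a y)) * (a (rs.2 - uv.2) / (∑' y, a y)) *
          w uv.1 uv.2 rs.1 rs.2)) :
    ∀ (t : ℕ) (y y' : Fin d → ℤ),
      ∫ ω, evolve A N0 t ω y * evolve A N0 t ω y' ∂μ =
        (∑' y'', a y'') ^ (2 * t) *
          ∑' xx : (Fin d → ℤ) × (Fin d → ℤ), N0 xx.1 * N0 xx.2 * Q t xx (y, y') :=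
  stmt8_general d μ A hAmeas hindep hident hnonneg rA hrange hshift hsq a ha hapos N0 hN0fin w hw Q
    hQ0 hQstep
end

section
/- Let $(N_t)$ be the linear stochastic evolution $N_{t,y} = \sum_x N_{t-1,x}A_{t,x,y}$ with i.i.d. matrices whose columns are independent, and suppose $\delta := P(\bigcap_{x} \{A_{1,x,0} = 0\}) > 0$ and the matrices have finite range $r_A$. Let $\mathcal{O}_t = \{x : N_{t,x} > 0\}$ be the occupied set. Then almost surely $\lim_{t\to\infty}|\mathcal{O}_t| \in \{0, \infty\}$, i.e., either the process dies out or the number of occupied sites tends to infinity. -/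
open MeasureTheory ProbabilityTheory Filter

/-!
Only the columns of `A t` indexed by the `rA`-neighbourhood of the occupied set can feed
`N (t + 1)`. Since `A t` is independent of the past and its columns are independent, the
process dies at step `t + 1` with conditional probability at least
`δ ^ |nbhd 𝒪_t| ≥ δ ^ (m (2 rA + 1) ^ d)` whenever `|𝒪_t| ≤ m`. By Lévy's conditional
Borel–Cantelli lemma, `|𝒪_t| ≤ m` infinitely often then forces extinction almost surely, and
extinction is absorbing.
-/

open Function

section Lattice

variable {d : ℕ}

noncomputable def box (x : Fin d → ℤ) (r : ℕ) : Finset (Fin d → ℤ) :=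
  Finset.Icc (fun i => x i - r) (fun i => x i + r)

lemma mem_box_of_sum_natAbs_le {x y : Fin d → ℤ} {r : ℕ}
    (h : ∑ i, (x i - y i).natAbs ≤ r) : y ∈ box x r := by
  have hi : ∀ i, |x i - y i| ≤ r := fun i => by
    rw [Int.abs_eq_natAbs]
    exact_mod_cast (Finset.single_le_sum (fun j _ => Nat.zero_le _) (Finset.mem_univ i)).trans h
  simp only [box, Finset.mem_Icc, Pi.le_def]
  exact ⟨fun i => by linarith [(abs_le.mp (hi i)).2], fun i => by linarith [(abs_le.mp (hi i)).1]⟩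

lemma card_box (x : Fin d → ℤ) (r : ℕ) : (box x r).card = (2 * r + 1) ^ d := by
  simp only [box, Pi.card_Icc, Int.card_Icc]
  rw [Finset.prod_congr rfl fun i _ => show (x i + r + 1 - (x i - r)).toNat = 2 * r + 1 by omega,
    Finset.prod_const, Finset.card_univ, Fintype.card_fin]

noncomputable def nbhd (r : ℕ) (F : Finset (Fin d → ℤ)) : Finset (Fin d → ℤ) :=
  F.biUnion fun x => box x r

lemma card_nbhd_le (r : ℕ) (F : Finset (Fin d → ℤ)) :
    (nbhd r F).card ≤ F.card * (2 * r + 1) ^ d := by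
  refine Finset.card_biUnion_le.trans ?_
  simp [card_box]

lemma mem_nbhd {r : ℕ} {F : Finset (Fin d → ℤ)} {x y : Fin d → ℤ} (hx : x ∈ F)
    (h : ∑ i, (x i - y i).natAbs ≤ r) : y ∈ nbhd r F :=
  Finset.mem_biUnion.mpr ⟨x, hx, mem_box_of_sum_natAbs_le h⟩

end Lattice

section Evolve

variable {d : ℕ} {Ω : Type*} {A : ℕ → Ω → (Fin d → ℤ) → (Fin d → ℤ) → ℝ}
  {N0 : (Fin d → ℤ) → ℝ} {rA : ℕ}

lemma evolve_succ_apply (t : ℕ) (ω : Ω) (y : Fin d → ℤ) :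
    evolve A N0 (t + 1) ω y = ∑' x, evolve A N0 t ω x * A t ω x y := rfl

lemma evolve_nonneg (hA : ∀ t ω x y, 0 ≤ A t ω x y) (hN0 : ∀ x, 0 ≤ N0 x) (t : ℕ) (ω : Ω)
    (x : Fin d → ℤ) : 0 ≤ evolve A N0 t ω x := by
  induction t generalizing x with
  | zero => exact hN0 x
  | succ t ih => exact tsum_nonneg fun x' => mul_nonneg (ih x') (hA t ω x' x)

lemma evolve_eq_zero_of_le {t s : ℕ} {ω : Ω} (h : evolve A N0 t ω = 0) (hts : t ≤ s) :
    evolve A N0 s ω = 0 := by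
  induction s, hts using Nat.le_induction with
  | base => exact h
  | succ s _ ih => funext y; simp [evolve_succ_apply, ih]

variable (hrange : ∀ t ω, ∀ x y : Fin d → ℤ, rA < ∑ i, (x i - y i).natAbs → A t ω x y = 0)
include hrange

lemma support_evolve_succ_subset {t : ℕ} {ω : Ω} {F : Finset (Fin d → ℤ)}
    (hF : support (evolve A N0 t ω) ⊆ F) : support (evolve A N0 (t + 1) ω) ⊆ nbhd rA F := by
  intro y hy
  by_contra hyF
  refine hy ((tsum_congr fun x => ?_).trans tsum_zero)
  by_cases hx : evolve A N0 t ω x = 0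
  · rw [hx, zero_mul]
  · have hfar : rA < ∑ i, (x i - y i).natAbs :=
      lt_of_not_ge fun hnear => hyF (mem_nbhd (hF hx) hnear)
    rw [hrange t ω x y hfar, mul_zero]

lemma evolve_succ_eq_zero {t : ℕ} {ω : Ω} {F : Finset (Fin d → ℤ)}
    (hF : support (evolve A N0 t ω) ⊆ F) (hcols : ∀ y ∈ nbhd rA F, ∀ x, A t ω x y = 0) :
    evolve A N0 (t + 1) ω = 0 := by
  funext y
  by_cases hy : y ∈ nbhd rA F
  · simp [evolve_succ_apply, hcols y hy]
  · exact notMem_support.mp fun h => hy (support_evolve_succ_subset hrange hF h)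

lemma exists_finset_support_evolve_subset (hN0 : (support N0).Finite) (t : ℕ) :
    ∃ F : Finset (Fin d → ℤ), ∀ ω, support (evolve A N0 t ω) ⊆ F := by
  induction t with
  | zero => exact ⟨hN0.toFinset, fun ω => by simp [evolve]⟩
  | succ t ih =>
    obtain ⟨F, hF⟩ := ih
    exact ⟨nbhd rA F, fun ω => support_evolve_succ_subset hrange (hF ω)⟩

lemma finite_support_evolve (hN0 : (support N0).Finite) (t : ℕ) (ω : Ω) :
    (support (evolve A N0 t ω)).Finite := by
  obtain ⟨F, hF⟩ := exists_finset_support_evolve_subset hrange hN0 t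
  exact F.finite_toSet.subset (hF ω)

end Evolve

section Filtration

variable {Ω β : Type*} [m0 : MeasurableSpace Ω] [mβ : MeasurableSpace β]

def pastFiltration (X : ℕ → Ω → β) (hX : ∀ t, Measurable (X t)) : Filtration ℕ m0 where
  seq t := ⨆ i < t, mβ.comap (X i)
  mono' _ _ hst := biSup_mono fun _ hi => lt_of_lt_of_le hi hst
  le' _ := iSup₂_le fun i _ => measurable_iff_comap_le.mp (hX i)

variable {X : ℕ → Ω → β} (hX : ∀ t, Measurable (X t))

lemma measurable_pastFiltration_succ (t : ℕ) : Measurable[pastFiltration X hX (t + 1)] (X t) :=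
  measurable_iff_comap_le.mpr <|
    le_iSup₂ (f := fun i (_ : i < t + 1) => mβ.comap (X i)) t t.lt_succ_self

lemma indep_pastFiltration {μ : Measure Ω} (hindep : iIndepFun X μ) (t : ℕ) :
    Indep (pastFiltration X hX t) (mβ.comap (X t)) μ := by
  have := indep_iSup_of_disjoint (m := fun i => mβ.comap (X i)) (S := Set.Iio t) (T := {t})
    (fun i => measurable_iff_comap_le.mp (hX i)) hindep.iIndep
    (Set.disjoint_singleton_right.mpr (lt_irrefl t))
  simpa [pastFiltration] using this

end Filtration

lemma indicator_le_condExp_indicator_of_indep {Ω : Type*} {m m' m0 : MeasurableSpace Ω}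
    {μ : Measure Ω} [IsFiniteMeasure μ] (hm : m ≤ m0) (hindep : Indep m m' μ)
    {C Z D : Set Ω} (hC : MeasurableSet[m] C) (hZ : MeasurableSet[m'] Z) (hD : MeasurableSet D)
    (hCZD : C ∩ Z ⊆ D) :
    C.indicator (fun _ => μ.real Z) ≤ᵐ[μ] μ[D.indicator 1 | m] := by
  have hCsm : StronglyMeasurable[m] (C.indicator fun _ => μ.real Z) :=
    stronglyMeasurable_const.indicator hC
  refine ae_le_of_ae_le_trim (hm := hm) <| ae_le_of_forall_setIntegral_le
    (((integrable_const _).indicator (hm _ hC)).trim hm hCsm)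
    (integrable_condExp.trim hm stronglyMeasurable_condExp) fun s hs _ => ?_
  rw [← setIntegral_trim hm hCsm hs, ← setIntegral_trim hm stronglyMeasurable_condExp hs,
    setIntegral_condExp hm ((integrable_const 1).indicator hD) hs,
    setIntegral_indicator (hm _ hC), setIntegral_indicator hD]
  simp only [Pi.one_apply, setIntegral_const, smul_eq_mul, mul_one]
  have hprod : μ.real (s ∩ C) * μ.real Z = μ.real (s ∩ C ∩ Z) := by
    simp only [measureReal_def, ← ENNReal.toReal_mul]
    rw [(Indep_iff _ _ μ).mp hindep _ _ (hs.inter hC) hZ]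
  rw [hprod]
  exact measureReal_mono fun ω ⟨⟨hs, hC⟩, hZ⟩ => ⟨hs, hCZD ⟨hC, hZ⟩⟩

theorem ae_frequently_of_le_condExp_indicator {Ω : Type*} {m0 : MeasurableSpace Ω}
    {μ : Measure Ω} [IsFiniteMeasure μ] {ℱ : Filtration ℕ m0} {s S : ℕ → Set Ω}
    (hs : ∀ n, MeasurableSet[ℱ n] (s n)) {p : ℝ} (hp : 0 < p)
    (hS : ∀ n, ∀ᵐ ω ∂μ, ω ∈ S n → p ≤ μ[(s (n + 1)).indicator 1 | ℱ n] ω) :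
    ∀ᵐ ω ∂μ, (∃ᶠ n in atTop, ω ∈ S n) → ∃ᶠ n in atTop, ω ∈ s n := by
  have hnonneg : ∀ n, 0 ≤ᵐ[μ] μ[(s (n + 1)).indicator (1 : Ω → ℝ) | ℱ n] := fun n =>
    condExp_nonneg (ae_of_all _ (Set.indicator_nonneg fun _ _ => zero_le_one))
  filter_upwards [ae_mem_limsup_atTop_iff μ hs, ae_all_iff.2 hS, ae_all_iff.2 hnonneg]
    with ω hlim hSω hnonnegω hfreq
  have hsum := mem_limsup_iff_frequently_mem.mpr hfreq
  rw [Set.limsup_eq_tendsto_sum_indicator_atTop hp] at hsum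
  refine mem_limsup_iff_frequently_mem.mp <| hlim.mpr <|
    tendsto_atTop_mono (fun n => Finset.sum_le_sum fun k _ => ?_) hsum
  by_cases hk : ω ∈ S k
  · simpa [hk] using hSω k hk
  · simpa [hk] using hnonnegω k

section Model

variable {d : ℕ} {Ω : Type*} [MeasurableSpace Ω] {μ : Measure Ω}
  {A : ℕ → Ω → (Fin d → ℤ) → (Fin d → ℤ) → ℝ} (hAmeas : ∀ t, Measurable (A t))
  {N0 : (Fin d → ℤ) → ℝ} {rA : ℕ}

lemma measurableSet_cols_eq_zero (G : Set (Fin d → ℤ)) :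
    MeasurableSet {M : (Fin d → ℤ) → (Fin d → ℤ) → ℝ | ∀ y ∈ G, ∀ x, M x y = 0} := by
  simp only [Set.ofPred_forall]
  exact .iInter fun y => .iInter fun _ => .iInter fun x =>
    measurableSet_eq_fun ((measurable_pi_apply y).comp (measurable_pi_apply x)) measurable_const

include hAmeas

lemma measure_col_eq_zero (hident : ∀ t, μ.map (A t) = μ.map (A 0))
    (hshift : ∀ z : Fin d → ℤ,
      μ.map (fun ω => fun x y => A 0 ω (x + z) (y + z)) = μ.map (A 0))
    (t : ℕ) (y : Fin d → ℤ) :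
    μ {ω | ∀ x, A t ω x y = 0} = μ {ω | ∀ x, A 0 ω x 0 = 0} := by
  let col (y : Fin d → ℤ) : Set ((Fin d → ℤ) → (Fin d → ℤ) → ℝ) := {M | ∀ x, M x y = 0}
  have hcol (y) : MeasurableSet (col y) := by
    simpa [col] using measurableSet_cols_eq_zero {y}
  have hshifted : Measurable fun ω => fun x y' => A 0 ω (x + y) (y' + y) :=
    measurable_pi_lambda _ fun x => measurable_pi_lambda _ fun y' =>
      (measurable_pi_apply _).comp ((measurable_pi_apply _).comp (hAmeas 0))
  have hpre : (fun ω => fun x y' => A 0 ω (x + y) (y' + y)) ⁻¹' col 0 = A 0 ⁻¹' col y := by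
    ext ω
    simp only [col, Set.mem_preimage, Set.mem_ofPred_eq, zero_add]
    exact ⟨fun h x => by simpa using h (x - y), fun h x => h (x + y)⟩
  calc μ (A t ⁻¹' col y)
      = μ.map (A 0) (col y) := by rw [← hident t, Measure.map_apply (hAmeas t) (hcol y)]
    _ = μ.map (A 0) (col 0) := by
      rw [Measure.map_apply (hAmeas 0) (hcol y), ← hpre, ← Measure.map_apply hshifted (hcol 0),
        hshift]
    _ = μ (A 0 ⁻¹' col 0) := Measure.map_apply (hAmeas 0) (hcol 0)

lemma measure_cols_eq_zero (hcols : ∀ t, iIndepFun (fun (y : Fin d → ℤ) ω => fun x => A t ω x y) μ)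
    (hident : ∀ t, μ.map (A t) = μ.map (A 0))
    (hshift : ∀ z : Fin d → ℤ,
      μ.map (fun ω => fun x y => A 0 ω (x + z) (y + z)) = μ.map (A 0))
    (t : ℕ) (G : Finset (Fin d → ℤ)) :
    μ {ω | ∀ y ∈ G, ∀ x, A t ω x y = 0} = μ {ω | ∀ x, A 0 ω x 0 = 0} ^ G.card := by
  have hzero : MeasurableSet {g : (Fin d → ℤ) → ℝ | ∀ x, g x = 0} := by
    simp only [Set.ofPred_forall]
    exact .iInter fun x => measurableSet_eq_fun (measurable_pi_apply x) measurable_const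
  have hcolset : {ω | ∀ y ∈ G, ∀ x, A t ω x y = 0} =
      ⋂ y ∈ G, (fun ω x => A t ω x y) ⁻¹' {g | ∀ x, g x = 0} := by
    ext ω
    simp
  rw [hcolset, (hcols t).measure_inter_preimage_eq_mul G fun _ _ => hzero, ← Finset.prod_const]
  exact Finset.prod_congr rfl fun y _ => measure_col_eq_zero hAmeas hident hshift t y

variable (hrange : ∀ t ω, ∀ x y : Fin d → ℤ, rA < ∑ i, (x i - y i).natAbs → A t ω x y = 0)
  (hN0fin : (support N0).Finite)
include hrange hN0fin

lemma measurable_evolve (t : ℕ) (y : Fin d → ℤ) :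
    Measurable[pastFiltration A hAmeas t] fun ω => evolve A N0 t ω y := by
  induction t generalizing y with
  | zero => exact measurable_const
  | succ t ih =>
    obtain ⟨F, hF⟩ := exists_finset_support_evolve_subset hrange hN0fin t
    have hsum : (fun ω => evolve A N0 (t + 1) ω y) =
        fun ω => ∑ x ∈ F, evolve A N0 t ω x * A t ω x y := by
      funext ω
      exact tsum_eq_sum fun x hx => by rw [notMem_support.mp fun h => hx (hF ω h), zero_mul]
    rw [hsum]
    refine Finset.measurable_sum _ fun x _ => Measurable.mul ?_ ?_
    · exact (ih x).mono ((pastFiltration A hAmeas).mono t.le_succ) le_rfl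
    · exact (measurable_pi_apply y).comp
        ((measurable_pi_apply x).comp (measurable_pastFiltration_succ hAmeas t))

lemma measurableSet_support_evolve_eq (t : ℕ) (F : Finset (Fin d → ℤ)) :
    MeasurableSet[pastFiltration A hAmeas t] {ω | support (evolve A N0 t ω) = F} := by
  simp only [Set.ext_iff, mem_support, Finset.mem_coe, Set.ofPred_forall]
  refine .iInter fun x => ?_
  have hzero := measurableSet_eq_fun (measurable_evolve hAmeas hrange hN0fin t x)
    (measurable_const (a := (0 : ℝ)))
  by_cases hx : x ∈ F
  · simp only [hx, iff_true]
    exact hzero.compl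
  · simp only [hx, iff_false, not_not]
    exact hzero

lemma measurableSet_evolve_eq_zero (t : ℕ) :
    MeasurableSet[pastFiltration A hAmeas t] {ω | evolve A N0 t ω = 0} := by
  simpa [← support_eq_empty_iff] using
    measurableSet_support_evolve_eq hAmeas hrange hN0fin t ∅

lemma le_condExp_indicator_evolve_eq_zero [IsProbabilityMeasure μ] (hindep : iIndepFun A μ)
    (hcols : ∀ t, iIndepFun (fun (y : Fin d → ℤ) ω => fun x => A t ω x y) μ)
    (hident : ∀ t, μ.map (A t) = μ.map (A 0))
    (hshift : ∀ z : Fin d → ℤ,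
      μ.map (fun ω => fun x y => A 0 ω (x + z) (y + z)) = μ.map (A 0))
    (m t : ℕ) :
    ∀ᵐ ω ∂μ, (support (evolve A N0 t ω)).ncard ≤ m →
      μ.real {ω | ∀ x, A 0 ω x 0 = 0} ^ (m * (2 * rA + 1) ^ d) ≤
        μ[{ω | evolve A N0 (t + 1) ω = 0}.indicator 1 | pastFiltration A hAmeas t] ω := by
  set δ := μ.real {ω | ∀ x, A 0 ω x 0 = 0}
  have hF (F : Finset (Fin d → ℤ)) : ∀ᵐ ω ∂μ,
      {ω | support (evolve A N0 t ω) = F}.indicator (fun _ => δ ^ (nbhd rA F).card) ω ≤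
        μ[{ω | evolve A N0 (t + 1) ω = 0}.indicator 1 | pastFiltration A hAmeas t] ω := by
    have hZ : MeasurableSet[MeasurableSpace.comap (A t) inferInstance]
        {ω | ∀ y ∈ nbhd rA F, ∀ x, A t ω x y = 0} :=
      ⟨_, measurableSet_cols_eq_zero (nbhd rA F : Set (Fin d → ℤ)), rfl⟩
    have := indicator_le_condExp_indicator_of_indep ((pastFiltration A hAmeas).le t)
      (indep_pastFiltration hAmeas hindep t)
      (measurableSet_support_evolve_eq hAmeas hrange hN0fin t F) hZ
      ((pastFiltration A hAmeas).le _ _ (measurableSet_evolve_eq_zero hAmeas hrange hN0fin _))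
      fun ω hω => evolve_succ_eq_zero hrange hω.1.subset hω.2
    rwa [measureReal_def, measure_cols_eq_zero hAmeas hcols hident hshift, ENNReal.toReal_pow,
      ← measureReal_def] at this
  filter_upwards [ae_all_iff.2 hF] with ω hω hsmall
  have hfin := finite_support_evolve hrange hN0fin t ω
  have hcard : hfin.toFinset.card ≤ m := by rwa [← Set.ncard_eq_toFinset_card _ hfin]
  have hbound := hω hfin.toFinset
  rw [Set.indicator_of_mem (by simp)] at hbound
  refine le_trans ?_ hbound
  exact pow_le_pow_of_le_one measureReal_nonneg measureReal_le_one
    ((card_nbhd_le _ _).trans (Nat.mul_le_mul_right _ hcard))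

end Model

/-- If `δ = P(⋂_x {A_{1,x,0} = 0}) > 0` then, a.s., the occupied set
`𝒪_t = {x : N_{t,x} > 0}` eventually dies out or its cardinality tends to infinity:
`lim_t |𝒪_t| ∈ {0, ∞}` a.s. -/
theorem stmt17 (d : ℕ)
    {Ω : Type*} [MeasurableSpace Ω] (μ : Measure Ω) [IsProbabilityMeasure μ]
    (A : ℕ → Ω → (Fin d → ℤ) → (Fin d → ℤ) → ℝ)
    (hAmeas : ∀ t, Measurable (A t))
    (hindep : iIndepFun A μ)
    (hident : ∀ t, μ.map (A t) = μ.map (A 0))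
    (hcols : ∀ t, iIndepFun
      (fun (y : Fin d → ℤ) ω => fun x => A t ω x y) μ)
    (hnonneg : ∀ t ω x y, 0 ≤ A t ω x y)
    (rA : ℕ)
    (hrange : ∀ t ω, ∀ x y : Fin d → ℤ, rA < (∑ i, (x i - y i).natAbs) → A t ω x y = 0)
    (hshift : ∀ z : Fin d → ℤ,
      μ.map (fun ω => fun x y => A 0 ω (x + z) (y + z)) = μ.map (A 0))
    (N0 : (Fin d → ℤ) → ℝ) (hN0nn : ∀ x, 0 ≤ N0 x)
    (hN0fin : (Function.support N0).Finite)
    (hδ : 0 < μ {ω | ∀ x, A 0 ω x 0 = 0}) :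
    ∀ᵐ ω ∂μ,
      (∀ᶠ t in atTop, {x | 0 < evolve A N0 t ω x} = ∅) ∨
      Tendsto (fun t => ({x | 0 < evolve A N0 t ω x}).ncard) atTop atTop := by
  have hocc (t : ℕ) (ω : Ω) : {x | 0 < evolve A N0 t ω x} = support (evolve A N0 t ω) :=
    Set.ext fun x => (evolve_nonneg hnonneg hN0nn t ω x).lt_iff_ne'
  have hsmall (m : ℕ) := ae_frequently_of_le_condExp_indicator
    (S := fun t => {ω | (support (evolve A N0 t ω)).ncard ≤ m})
    (measurableSet_evolve_eq_zero hAmeas hrange hN0fin)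
    (pow_pos (ENNReal.toReal_pos hδ.ne' (measure_ne_top _ _)) _)
    (le_condExp_indicator_evolve_eq_zero hAmeas hrange hN0fin hindep hcols hident hshift m)
  filter_upwards [ae_all_iff.2 hsmall] with ω hω
  simp only [hocc, support_eq_empty_iff]
  by_cases hext : ∃ t, evolve A N0 t ω = 0
  · obtain ⟨t, ht⟩ := hext
    exact .inl (eventually_atTop.2 ⟨t, fun s hs => evolve_eq_zero_of_le ht hs⟩)
  · refine .inr (tendsto_atTop.2 fun m => ?_)
    by_contra hm
    exact hext (hω m ((not_eventually.1 hm).mono fun t ht => (not_le.1 ht).le)).exists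
end

section
/- Suppose $(b_t)_{t \ge 1}$ is a sequence of nonnegative reals satisfying $b_t \le (1 - \alpha_t) b_{t-1} + \alpha_t \varepsilon_t$ for all $t \ge 1$, where $\alpha_t = c/(t\ell_t)^{1/2} \in (0,1)$ with $\ell_t = t^{1/3}$ and $\varepsilon_t = c_3 \exp(-c_2 t^{1/3})$ for positive constants $c, c_2, c_3$. Then $b_t = O(\exp(-c' t^{1/3}))$ as $t \to \infty$ for some constant $c' > 0$. -/
open Filter Asymptotics

private lemma exp_le_one_add_two_mul {y : ℝ} (hy0 : 0 ≤ y) (hy : y ≤ 1/2) :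
    Real.exp y ≤ 1 + 2*y := by
  have h1 := Real.add_one_le_exp (-y)
  have h2 : Real.exp (-y) * Real.exp y = 1 := by rw [← Real.exp_add]; simp
  nlinarith [Real.exp_pos (-y), Real.exp_pos y]

private lemma stmt19_core (c c2 c3 c' M bn bn1 P u v : ℝ)
    (hP0 : 0 < P) (hu0 : 0 ≤ u) (hv0 : 0 ≤ v)
    (hα1 : 0 < c / P) (hα2 : c / P < 1)
    (hc' : 0 < c') (hc'c2 : c' ≤ c2 / 2) (hc'c : c' ≤ c / 4)
    (hM : 0 < M) (hM2 : 2 * c3 ≤ M) (hc3 : 0 < c3)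
    (key1 : u - v ≤ P⁻¹)
    (ih : bn ≤ M * Real.exp (-c' * v))
    (hrec : bn1 ≤ (1 - c / P) * bn + (c / P) * (c3 * Real.exp (-c2 * u))) :
    bn1 ≤ M * Real.exp (-c' * u) := by
  have h1α : 0 ≤ 1 - c / P := by linarith
  -- error quantity y = c'/P
  have hy0 : 0 ≤ c' / P := by positivity
  have hy4 : 4 * (c' / P) ≤ c / P := by
    have h : c' / P ≤ (c / 4) / P := by gcongr
    have h2 : (c / 4) / P = (c / P) / 4 := by ring
    linarith [h.trans_eq h2]
  have hyhalf : c' / P ≤ 1 / 2 := by linarith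
  have hexpy : Real.exp (c' / P) ≤ 1 + 2 * (c' / P) := exp_le_one_add_two_mul hy0 hyhalf
  have hEv : Real.exp (-c' * v) ≤ Real.exp (-c' * u) * Real.exp (c' / P) := by
    rw [← Real.exp_add]
    apply Real.exp_le_exp.mpr
    have h : c' * (u - v) ≤ c' * P⁻¹ := mul_le_mul_of_nonneg_left key1 hc'.le
    rw [div_eq_mul_inv]
    nlinarith
  have hEps : c3 * Real.exp (-c2 * u) ≤ (M / 2) * Real.exp (-c' * u) := by
    have h1 : Real.exp (-c2 * u) ≤ Real.exp (-c' * u) := by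
      apply Real.exp_le_exp.mpr
      nlinarith
    nlinarith [Real.exp_pos (-c2 * u), Real.exp_pos (-c' * u)]
  have ih' : bn ≤ M * (Real.exp (-c' * u) * Real.exp (c' / P)) :=
    ih.trans (mul_le_mul_of_nonneg_left hEv hM.le)
  have step2 : bn1 ≤ (1 - c / P) * (M * (Real.exp (-c' * u) * Real.exp (c' / P)))
      + (c / P) * ((M / 2) * Real.exp (-c' * u)) := by
    refine hrec.trans (add_le_add ?_ ?_)
    · exact mul_le_mul_of_nonneg_left ih' h1α
    · exact mul_le_mul_of_nonneg_left hEps hα1.le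
  have hey : (1 - c / P) * Real.exp (c' / P) ≤ 1 - (c / P) / 2 := by
    calc (1 - c / P) * Real.exp (c' / P) ≤ (1 - c / P) * (1 + 2 * (c' / P)) :=
          mul_le_mul_of_nonneg_left hexpy h1α
      _ ≤ 1 - (c / P) / 2 := by nlinarith
  have hfactor : (1 - c / P) * (M * Real.exp (c' / P)) + (c / P) * (M / 2) ≤ M := by
    nlinarith
  calc bn1 ≤ (1 - c / P) * (M * (Real.exp (-c' * u) * Real.exp (c' / P)))
        + (c / P) * ((M / 2) * Real.exp (-c' * u)) := step2
    _ = ((1 - c / P) * (M * Real.exp (c' / P)) + (c / P) * (M / 2)) * Real.exp (-c' * u) := by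
        ring
    _ ≤ M * Real.exp (-c' * u) := by
        exact mul_le_mul_of_nonneg_right hfactor (Real.exp_pos _).le

/-- Iteration step for the slow-growth bound in `d = 1`: if `b_t ≤ (1-α_t) b_{t-1} + α_t ε_t`
with `α_t = c/(t ℓ_t)^{1/2} ∈ (0,1)`, `ℓ_t = t^{1/3}`, `ε_t = c₃ exp(-c₂ t^{1/3})`,
then `b_t = O(exp(-c' t^{1/3}))` for some `c' > 0`. -/
theorem stmt19 (b : ℕ → ℝ) (c c2 c3 : ℝ) (hc : 0 < c) (hc2 : 0 < c2) (hc3 : 0 < c3)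
    (hbnn : ∀ t, 0 ≤ b t)
    (hα : ∀ t : ℕ, 1 ≤ t →
      c / ((t : ℝ) * (t : ℝ) ^ ((1:ℝ)/3)) ^ ((1:ℝ)/2) ∈ Set.Ioo (0:ℝ) 1)
    (hrec : ∀ t : ℕ, 1 ≤ t →
      b t ≤ (1 - c / ((t : ℝ) * (t : ℝ) ^ ((1:ℝ)/3)) ^ ((1:ℝ)/2)) * b (t - 1)
        + (c / ((t : ℝ) * (t : ℝ) ^ ((1:ℝ)/3)) ^ ((1:ℝ)/2)) *
            (c3 * Real.exp (-c2 * (t : ℝ) ^ ((1:ℝ)/3)))) :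
    ∃ c' : ℝ, 0 < c' ∧
      (fun t : ℕ => b t) =O[atTop] (fun t : ℕ => Real.exp (-c' * (t : ℝ) ^ ((1:ℝ)/3))) := by
  have hc' : 0 < min (c2/2) (c/4) := lt_min (by linarith) (by linarith)
  have hM : 0 < b 0 + 2*c3 := by have := hbnn 0; nlinarith
  have key : ∀ t : ℕ, b t ≤ (b 0 + 2*c3) * Real.exp (-(min (c2/2) (c/4)) * (t:ℝ)^((1:ℝ)/3)) := by
    intro t
    induction t with
    | zero =>
      have h0 : ((0:ℕ):ℝ)^((1:ℝ)/3) = 0 := by norm_num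
      rw [h0]
      simp only [mul_zero, Real.exp_zero, mul_one]
      nlinarith [hbnn 0]
    | succ n ih =>
      have hn1 : (1:ℕ) ≤ n + 1 := by omega
      have hstep := hrec (n+1) hn1
      simp only [Nat.add_sub_cancel] at hstep
      have hT0 : (0:ℝ) < ((n+1:ℕ):ℝ) := by positivity
      have hT1 : (1:ℝ) ≤ ((n+1:ℕ):ℝ) := by
        push_cast; linarith [Nat.cast_nonneg (α := ℝ) n]
      have hbase : (((n+1:ℕ):ℝ) * ((n+1:ℕ):ℝ)^((1:ℝ)/3))^((1:ℝ)/2)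
          = ((n+1:ℕ):ℝ)^((2:ℝ)/3) := by
        have h1 : ((n+1:ℕ):ℝ) * ((n+1:ℕ):ℝ)^((1:ℝ)/3) = ((n+1:ℕ):ℝ)^((4:ℝ)/3) := by
          nth_rewrite 1 [← Real.rpow_one ((n+1:ℕ):ℝ)]
          rw [← Real.rpow_add hT0]; norm_num
        rw [h1, ← Real.rpow_mul hT0.le]; norm_num
      rw [hbase] at hstep
      obtain ⟨hα1, hα2⟩ : 0 < c / ((n+1:ℕ):ℝ)^((2:ℝ)/3) ∧ c / ((n+1:ℕ):ℝ)^((2:ℝ)/3) < 1 := by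
        have h := hα (n+1) hn1
        rw [hbase] at h
        exact ⟨h.1, h.2⟩
      have hP0 : (0:ℝ) < ((n+1:ℕ):ℝ)^((2:ℝ)/3) := Real.rpow_pos_of_pos hT0 _
      have hu0 : (0:ℝ) ≤ ((n+1:ℕ):ℝ)^((1:ℝ)/3) := (Real.rpow_pos_of_pos hT0 _).le
      have hv0 : (0:ℝ) ≤ ((n:ℕ):ℝ)^((1:ℝ)/3) := Real.rpow_nonneg (Nat.cast_nonneg n) _
      have hnT : ((n:ℕ):ℝ) = ((n+1:ℕ):ℝ) - 1 := by push_cast; ring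
      have huP : ((n+1:ℕ):ℝ)^((1:ℝ)/3) * ((n+1:ℕ):ℝ)^((2:ℝ)/3) = ((n+1:ℕ):ℝ) := by
        rw [← Real.rpow_add hT0]; norm_num
      have hvP : ((n+1:ℕ):ℝ) - 1 ≤ ((n:ℕ):ℝ)^((1:ℝ)/3) * ((n+1:ℕ):ℝ)^((2:ℝ)/3) := by
        have hn0 : (0:ℝ) ≤ ((n:ℕ):ℝ) := Nat.cast_nonneg n
        have e1 : ((n:ℕ):ℝ) = ((n:ℕ):ℝ)^((1:ℝ)/3) * ((n:ℕ):ℝ)^((2:ℝ)/3) := by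
          rw [← Real.rpow_add' hn0 (by norm_num)]
          norm_num
        have e2 : ((n:ℕ):ℝ)^((2:ℝ)/3) ≤ ((n+1:ℕ):ℝ)^((2:ℝ)/3) :=
          Real.rpow_le_rpow hn0 (by rw [hnT]; linarith) (by norm_num)
        calc ((n+1:ℕ):ℝ) - 1 = ((n:ℕ):ℝ) := hnT.symm
          _ = ((n:ℕ):ℝ)^((1:ℝ)/3) * ((n:ℕ):ℝ)^((2:ℝ)/3) := e1
          _ ≤ ((n:ℕ):ℝ)^((1:ℝ)/3) * ((n+1:ℕ):ℝ)^((2:ℝ)/3) := by nlinarith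
      have key1 : ((n+1:ℕ):ℝ)^((1:ℝ)/3) - ((n:ℕ):ℝ)^((1:ℝ)/3)
          ≤ (((n+1:ℕ):ℝ)^((2:ℝ)/3))⁻¹ := by
        rw [inv_eq_one_div, le_div_iff₀ hP0]
        nlinarith
      exact stmt19_core c c2 c3 (min (c2/2) (c/4)) (b 0 + 2*c3) (b n) (b (n+1))
        (((n+1:ℕ):ℝ)^((2:ℝ)/3)) (((n+1:ℕ):ℝ)^((1:ℝ)/3)) (((n:ℕ):ℝ)^((1:ℝ)/3))
        hP0 hu0 hv0 hα1 hα2 hc' (min_le_left _ _) (min_le_right _ _)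
        hM (by nlinarith [hbnn 0]) hc3 key1 ih hstep
  refine ⟨min (c2/2) (c/4), hc', ?_⟩
  rw [isBigO_iff]
  refine ⟨b 0 + 2*c3, Eventually.of_forall fun t => ?_⟩
  rw [Real.norm_eq_abs, Real.norm_eq_abs, abs_of_nonneg (hbnn t),
    abs_of_nonneg (Real.exp_pos _).le]
  exact key t
end
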